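/- Fix H > 1 and q = arcoth(H). If real numbers r, s satisfy r² + s² + 2rs cosh q = 1/4 and 4rs sinh q = t with t ≠ 0, then r ≠ 0, s = t/(4 r sinh q), t ≤ T₁ := (tanh(q/2))/2, and r² = (1/8)(1 − 2Ht ± 2√(T₁ − t)√(T₂ − t)) where T₂ := 1/(2 tanh(q/2)); moreover T₁ < T₂. -/

import Mathlib

/-!
Write `τ = tanh (q/2)`, so that `τ (1 + cosh q) = sinh q` and `τ sinh q = cosh q - 1`.
Substituting `t = 4rs sinh q` into the first residue equation gives the two factorisations
`T₁ - t = 2τ (r - s)²` and `T₂ - t = 2 (r + s)² / τ`, so `t ≤ T₁` and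
`√(T₁ - t) √(T₂ - t) = 2 |r² - s²|`; together with `1 - 2Ht = 4 (r² + s²)` this expresses `r²`
as `((r² + s²) ± |r² - s²|) / 2`. Finally `T₁ < T₂` because `0 < τ < 1`.
-/

open Real

namespace Real

theorem tanh_pos_of_pos {x : ℝ} (hx : 0 < x) : 0 < tanh x := by
  rw [tanh_eq_sinh_div_cosh]
  exact div_pos (sinh_pos_iff.mpr hx) (cosh_pos x)

theorem sinh_eq_two_mul_sinh_half_mul_cosh_half (x : ℝ) :
    sinh x = 2 * sinh (x / 2) * cosh (x / 2) := by
  rw [← sinh_two_mul, mul_div_cancel₀ x two_ne_zero]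

theorem cosh_eq_cosh_half_sq_add_sinh_half_sq (x : ℝ) :
    cosh x = cosh (x / 2) ^ 2 + sinh (x / 2) ^ 2 := by
  rw [← cosh_two_mul, mul_div_cancel₀ x two_ne_zero]

theorem tanh_half_mul_one_add_cosh (x : ℝ) : tanh (x / 2) * (1 + cosh x) = sinh x := by
  rw [tanh_eq_sinh_div_cosh, sinh_eq_two_mul_sinh_half_mul_cosh_half x,
    cosh_eq_cosh_half_sq_add_sinh_half_sq x]
  field_simp
  linear_combination (-sinh (x / 2)) * cosh_sq' (x / 2)

theorem tanh_half_mul_sinh (x : ℝ) : tanh (x / 2) * sinh x = cosh x - 1 := by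
  rw [tanh_eq_sinh_div_cosh, sinh_eq_two_mul_sinh_half_mul_cosh_half x,
    cosh_eq_cosh_half_sq_add_sinh_half_sq x]
  field_simp
  linear_combination -cosh_sq' (x / 2)

end Real

namespace Delaunay

variable {c σ τ r s t : ℝ}

theorem half_sub_weight_eq (h : r ^ 2 + s ^ 2 + 2 * r * s * c = 1 / 4)
    (ht : 4 * r * s * σ = t) (hτ : τ * (1 + c) = σ) :
    τ / 2 - t = 2 * τ * (r - s) ^ 2 := by
  rw [← ht, ← hτ]
  linear_combination (-2 * τ) * h

theorem inv_half_sub_weight_eq (h : r ^ 2 + s ^ 2 + 2 * r * s * c = 1 / 4)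
    (ht : 4 * r * s * σ = t) (hτ : τ * σ = c - 1) (hτ₀ : τ ≠ 0) :
    1 / (2 * τ) - t = 2 * (r + s) ^ 2 / τ := by
  rw [← ht]
  field_simp
  linear_combination (-4) * h + (-8 * r * s) * hτ

theorem one_sub_two_mul_weight_eq (h : r ^ 2 + s ^ 2 + 2 * r * s * c = 1 / 4)
    (ht : 4 * r * s * σ = t) (hσ : σ ≠ 0) :
    1 - 2 * (c / σ) * t = 4 * (r ^ 2 + s ^ 2) := by
  rw [← ht]
  field_simp
  linear_combination (-4) * h

end Delaunay

theorem sqrt_two_mul_sub_sq_mul_sqrt_add_sq {τ : ℝ} (hτ : 0 < τ) (r s : ℝ) :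
    √(2 * τ * (r - s) ^ 2) * √(2 * (r + s) ^ 2 / τ) = 2 * |r ^ 2 - s ^ 2| := by
  rw [← sqrt_mul (by positivity), show 2 * τ * (r - s) ^ 2 * (2 * (r + s) ^ 2 / τ)
    = (2 * (r ^ 2 - s ^ 2)) ^ 2 by field_simp; ring, sqrt_sq_eq_abs, abs_mul, abs_two]

/-- For `H = coth q > 1`, if `r² + s² + 2rs cosh q = 1/4` and `4rs sinh q = t ≠ 0`, then
`r ≠ 0`, `s = t/(4r sinh q)`, `t ≤ T₁ = tanh(q/2)/2`, and
`r² = (1 − 2Ht ± 2√(T₁−t)√(T₂−t))/8` with `T₂ = 1/(2 tanh(q/2))`; moreover `T₁ < T₂`. -/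
theorem delaunay_parameters (q t r s H : ℝ) (hq : 0 < q)
    (hH : H = Real.cosh q / Real.sinh q)
    (h1 : r ^ 2 + s ^ 2 + 2 * r * s * Real.cosh q = 1 / 4)
    (h2 : 4 * r * s * Real.sinh q = t) (ht : t ≠ 0) :
    r ≠ 0 ∧ s = t / (4 * r * Real.sinh q) ∧
    t ≤ Real.tanh (q / 2) / 2 ∧
    (r ^ 2 = (1 - 2 * H * t
        + 2 * Real.sqrt (Real.tanh (q / 2) / 2 - t)
            * Real.sqrt (1 / (2 * Real.tanh (q / 2)) - t)) / 8 ∨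
     r ^ 2 = (1 - 2 * H * t
        - 2 * Real.sqrt (Real.tanh (q / 2) / 2 - t)
            * Real.sqrt (1 / (2 * Real.tanh (q / 2)) - t)) / 8) ∧
    Real.tanh (q / 2) / 2 < 1 / (2 * Real.tanh (q / 2)) := by
  have hsinh : 0 < sinh q := sinh_pos_iff.mpr hq
  have hτ : 0 < tanh (q / 2) := tanh_pos_of_pos (half_pos hq)
  have hr : r ≠ 0 := by
    rintro rfl
    exact ht (by rw [← h2]; ring)
  have hT₁ := Delaunay.half_sub_weight_eq h1 h2 (tanh_half_mul_one_add_cosh q)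
  have hT₂ := Delaunay.inv_half_sub_weight_eq h1 h2 (tanh_half_mul_sinh q) hτ.ne'
  have hHt := Delaunay.one_sub_two_mul_weight_eq h1 h2 hsinh.ne'
  have hsqrt : 2 * √(tanh (q / 2) / 2 - t) * √(1 / (2 * tanh (q / 2)) - t)
      = 4 * |r ^ 2 - s ^ 2| := by
    rw [hT₁, hT₂, mul_assoc, sqrt_two_mul_sub_sq_mul_sqrt_add_sq hτ]
    ring
  refine ⟨hr, ?_, ?_, ?_, ?_⟩
  · rw [eq_div_iff (by positivity), ← h2]
    ring
  · have : 0 ≤ tanh (q / 2) / 2 - t := hT₁ ▸ by positivity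
    linarith
  · rw [hsqrt, hH, hHt]
    rcases abs_choice (r ^ 2 - s ^ 2) with h | h
    · left; rw [h]; ring
    · right; rw [h]; ring
  · rw [div_lt_div_iff₀ two_pos (by positivity)]
    nlinarith [tanh_lt_one (q / 2)]
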